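/- arXiv:2307.06552 — 2 statements merged into one kernel-verified Lean document; each statement's English description precedes it below -/
import Mathlib

section
/- Uniform vanishing of the stage-2 noise term (the G₂ claim). In the two-stage LAGO setup, sup_{β ∈ B} ‖ (1/n) Σ_{j≤J₂} Σ_{i≤n_j^{(2)}(n)} h′(⟨β, X_j^{(2,n)}⟩) X_j^{(2,n)} ε_{ij}^{(2,n)} ‖ → 0 in probability as n → ∞. -/
open MeasureTheory ProbabilityTheory Filter
open scoped RealInnerProductSpace BigOperators NNReal Topology ENNReal

noncomputable section

/-- Concatenate `(1, a, z)` into a design vector in `ℝ^(1+P+Q)`. -/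
def designVec {P Q : ℕ} (a : EuclideanSpace ℝ (Fin P)) (z : EuclideanSpace ℝ (Fin Q)) :
    EuclideanSpace ℝ (Fin (1 + P + Q)) :=
  (EuclideanSpace.equiv (Fin (1 + P + Q)) ℝ).symm
    (Fin.append (Fin.append ![(1 : ℝ)] ((EuclideanSpace.equiv (Fin P) ℝ) a))
      ((EuclideanSpace.equiv (Fin Q) ℝ) z))

/-- The two-stage LAGO setup. -/
structure LagoSetup (Ω : Type) [MeasurableSpace Ω] (Pr : Measure Ω) (J1 J2 P Q : ℕ) where
  hJ1 : 1 ≤ J1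
  hJ2 : 1 ≤ J2
  hP : 1 ≤ P
  hQ : 1 ≤ Q
  /-- stage-1 interventions -/
  a1 : Fin J1 → EuclideanSpace ℝ (Fin P)
  /-- stage-1 center covariates -/
  z1 : Fin J1 → EuclideanSpace ℝ (Fin Q)
  /-- limit stage-2 interventions -/
  a2 : Fin J2 → EuclideanSpace ℝ (Fin P)
  /-- stage-2 center covariates -/
  z2 : Fin J2 → EuclideanSpace ℝ (Fin Q)
  /-- random stage-2 interventions, for each total sample size `n` -/
  A2 : ℕ → Fin J2 → Ω → EuclideanSpace ℝ (Fin P)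
  measA2 : ∀ n j, Measurable (A2 n j)
  /-- per-center sample sizes, stage 1 -/
  n1 : ℕ → Fin J1 → ℕ
  /-- per-center sample sizes, stage 2 -/
  n2 : ℕ → Fin J2 → ℕ
  sum_sizes : ∀ n, (∑ j, n1 n j) + (∑ j, n2 n j) = n
  α1 : Fin J1 → ℝ
  α2 : Fin J2 → ℝ
  α1_pos : ∀ j, 0 < α1 j
  α2_pos : ∀ j, 0 < α2 j
  α1_lim : ∀ j, Tendsto (fun n : ℕ => (n1 n j : ℝ) / n) atTop (𝓝 (α1 j))
  α2_lim : ∀ j, Tendsto (fun n : ℕ => (n2 n j : ℝ) / n) atTop (𝓝 (α2 j))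
  /-- the mean function (inverse link) -/
  h : ℝ → ℝ
  h_smooth : ContDiff ℝ 2 h
  /-- the (compact) parameter space -/
  B : Set (EuclideanSpace ℝ (Fin (1 + P + Q)))
  B_compact : IsCompact B
  /-- the true parameter -/
  βstar : EuclideanSpace ℝ (Fin (1 + P + Q))
  βstar_mem : βstar ∈ B
  /-- stage-1 errors -/
  ε1 : Fin J1 → ℕ → Ω → ℝ
  /-- realized stage-2 errors -/
  ε2n : ℕ → Fin J2 → ℕ → Ω → ℝ
  /-- coupled i.i.d. stage-2 error arrays -/
  ε2 : Fin J2 → ℕ → Ω → ℝ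
  meas_ε1 : ∀ j i, Measurable (ε1 j i)
  meas_ε2n : ∀ n j i, Measurable (ε2n n j i)
  meas_ε2 : ∀ j i, Measurable (ε2 j i)
  /-- stage-1 error variances σ₁²(j) -/
  var1 : Fin J1 → ℝ
  /-- stage-2 error variances σ₂²(j) -/
  var2 : Fin J2 → ℝ
  /-- Assumption 3: convergence in probability of the stage-2 interventions -/
  A2_tendsto : ∀ j, TendstoInMeasure Pr (fun n => A2 n j) atTop (fun _ => a2 j)
  /-- Assumption 4: all interventions and errors take values in one compact set -/
  bound : ℝ
  A2_bdd : ∀ n j ω, ‖A2 n j ω‖ ≤ bound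
  ε1_bdd : ∀ j i ω, |ε1 j i ω| ≤ bound
  ε2n_bdd : ∀ n j i ω, |ε2n n j i ω| ≤ bound
  ε2_bdd : ∀ j i ω, |ε2 j i ω| ≤ bound
  /-- identical distribution within each error array -/
  ε1_ident : ∀ j i, IdentDistrib (ε1 j i) (ε1 j 0) Pr Pr
  ε2_ident : ∀ j i, IdentDistrib (ε2 j i) (ε2 j 0) Pr Pr
  ε1_mean : ∀ j i, ∫ ω, ε1 j i ω ∂Pr = 0
  ε2_mean : ∀ j i, ∫ ω, ε2 j i ω ∂Pr = 0
  ε1_var : ∀ j i, ∫ ω, (ε1 j i ω) ^ 2 ∂Pr = var1 j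
  ε2_var : ∀ j i, ∫ ω, (ε2 j i ω) ^ 2 ∂Pr = var2 j
  /-- all ε¹ and ε² variables are mutually independent -/
  ε_indep : iIndepFun
      (Sum.elim (fun p : Fin J1 × ℕ => fun ω => ε1 p.1 p.2 ω)
        (fun p : Fin J2 × ℕ => fun ω => ε2 p.1 p.2 ω)) Pr
  /-- the coupled ε² arrays are independent of (ε¹, (A_j^{(2,n)})_{j,n}) -/
  ε2_indep_rest : IndepFun
      (fun ω => (fun p : Fin J2 × ℕ => ε2 p.1 p.2 ω))
      (fun ω => ((fun p : Fin J1 × ℕ => ε1 p.1 p.2 ω),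
        (fun q : ℕ × Fin J2 => A2 q.1 q.2 ω))) Pr
  /-- Assumption 5: joint-law equality between realized and coupled errors -/
  jointLaw : ∀ n,
    Measure.map (fun ω => ((fun p : Fin J1 × ℕ => ε1 p.1 p.2 ω),
        (fun j => A2 n j ω), (fun p : Fin J2 × ℕ => ε2n n p.1 p.2 ω))) Pr
    = Measure.map (fun ω => ((fun p : Fin J1 × ℕ => ε1 p.1 p.2 ω),
        (fun j => A2 n j ω), (fun p : Fin J2 × ℕ => ε2 p.1 p.2 ω))) Pr

namespace LagoSetup

variable {Ω : Type} [MeasurableSpace Ω] {Pr : Measure Ω} {J1 J2 P Q : ℕ}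

/-- stage-1 design vectors x_j^{(1)} = (1, a_j^{(1)}, z_j^{(1)}) -/
def x1v (S : LagoSetup Ω Pr J1 J2 P Q) (j : Fin J1) : EuclideanSpace ℝ (Fin (1 + P + Q)) :=
  designVec (S.a1 j) (S.z1 j)

/-- limit stage-2 design vectors x_j^{(2)} = (1, a_j^{(2)}, z_j^{(2)}) -/
def x2v (S : LagoSetup Ω Pr J1 J2 P Q) (j : Fin J2) : EuclideanSpace ℝ (Fin (1 + P + Q)) :=
  designVec (S.a2 j) (S.z2 j)

/-- random stage-2 design vectors X_j^{(2,n)} = (1, A_j^{(2,n)}, z_j^{(2)}) -/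
def X2v (S : LagoSetup Ω Pr J1 J2 P Q) (n : ℕ) (j : Fin J2) (ω : Ω) :
    EuclideanSpace ℝ (Fin (1 + P + Q)) :=
  designVec (S.A2 n j ω) (S.z2 j)

/-- The LAGO estimating function U_n(β). -/
def U (S : LagoSetup Ω Pr J1 J2 P Q) (n : ℕ) (β : EuclideanSpace ℝ (Fin (1 + P + Q))) (ω : Ω) :
    EuclideanSpace ℝ (Fin (1 + P + Q)) :=
  (n : ℝ)⁻¹ •
    ((∑ j, ∑ i ∈ Finset.range (S.n1 n j),
        (deriv S.h ⟪β, S.x1v j⟫ *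
          (S.h ⟪S.βstar, S.x1v j⟫ + S.ε1 j i ω - S.h ⟪β, S.x1v j⟫)) • S.x1v j) +
      (∑ j, ∑ i ∈ Finset.range (S.n2 n j),
        (deriv S.h ⟪β, S.X2v n j ω⟫ *
          (S.h ⟪S.βstar, S.X2v n j ω⟫ + S.ε2n n j i ω - S.h ⟪β, S.X2v n j ω⟫)) •
          S.X2v n j ω))

/-- The deterministic limit u(β) of the estimating function. -/
def uLim (S : LagoSetup Ω Pr J1 J2 P Q) (β : EuclideanSpace ℝ (Fin (1 + P + Q))) :
    EuclideanSpace ℝ (Fin (1 + P + Q)) :=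
  (∑ j, (S.α1 j * deriv S.h ⟪β, S.x1v j⟫ *
      (S.h ⟪S.βstar, S.x1v j⟫ - S.h ⟪β, S.x1v j⟫)) • S.x1v j) +
    (∑ j, (S.α2 j * deriv S.h ⟪β, S.x2v j⟫ *
      (S.h ⟪S.βstar, S.x2v j⟫ - S.h ⟪β, S.x2v j⟫)) • S.x2v j)

/-- The limiting Jacobian matrix J(β*). -/
def Jmat (S : LagoSetup Ω Pr J1 J2 P Q) : Matrix (Fin (1 + P + Q)) (Fin (1 + P + Q)) ℝ :=
  Matrix.of fun p q =>
    (∑ j, S.α1 j * (deriv S.h ⟪S.βstar, S.x1v j⟫) ^ 2 * (S.x1v j p * S.x1v j q)) +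
      (∑ j, S.α2 j * (deriv S.h ⟪S.βstar, S.x2v j⟫) ^ 2 * (S.x2v j p * S.x2v j q))

/-- The limiting score covariance matrix V(β*). -/
def Vmat (S : LagoSetup Ω Pr J1 J2 P Q) : Matrix (Fin (1 + P + Q)) (Fin (1 + P + Q)) ℝ :=
  Matrix.of fun p q =>
    (∑ j, S.α1 j * S.var1 j * (deriv S.h ⟪S.βstar, S.x1v j⟫) ^ 2 * (S.x1v j p * S.x1v j q)) +
      (∑ j, S.α2 j * S.var2 j * (deriv S.h ⟪S.βstar, S.x2v j⟫) ^ 2 * (S.x2v j p * S.x2v j q))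

end LagoSetup

/-- `μ` is the centered Gaussian law on ℝ^d with covariance matrix `C`
(characterized via all one-dimensional projections, Cramér–Wold). -/
def IsCenteredGaussianLaw {d : ℕ} (μ : Measure (EuclideanSpace ℝ (Fin d)))
    (C : Matrix (Fin d) (Fin d) ℝ) : Prop :=
  IsProbabilityMeasure μ ∧
    ∀ l : EuclideanSpace ℝ (Fin d),
      Measure.map (fun v => ⟪l, v⟫) μ =
        gaussianReal 0 (Real.toNNReal (∑ p, ∑ q, l p * C p q * l q))

/-- Convergence in distribution: weak convergence of the laws. -/
def TendstoInDistribution {Ω : Type} [MeasurableSpace Ω] {E : Type*}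
    [MeasurableSpace E] [TopologicalSpace E]
    (X : ℕ → Ω → E) (Pr : Measure Ω) (μ : Measure E) : Prop :=
  ∀ f : BoundedContinuousFunction E ℝ,
    Tendsto (fun n => ∫ ω, f (X n ω) ∂Pr) atTop (𝓝 (∫ x, f x ∂μ))

/-!
The noise term is dominated, uniformly in `β ∈ B`, by `C ∑_j |n⁻¹ ∑_{i < n_j⁽²⁾} ε_ij⁽²ⁿ⁾|`:
the design vectors `X_j⁽²ⁿ⁾` stay in a fixed ball, so `|h'(⟨β, x⟩)| ‖x‖` is bounded on the compact
set `B × ball`. By the joint-law assumption each centre average has the law of the same average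
of the coupled i.i.d. errors `ε⁽²⁾`, and that average tends to `0` in probability by Chebyshev's
inequality, since `n_j⁽²⁾ ≤ n`.
-/

section ConvergenceInMeasure

variable {α ι E : Type*} {mα : MeasurableSpace α} {μ : Measure α} {l : Filter ι}

theorem TendstoInMeasure.add [SeminormedAddCommGroup E] {f g : ι → α → E} {F G : α → E}
    (hf : TendstoInMeasure μ f l F) (hg : TendstoInMeasure μ g l G) :
    TendstoInMeasure μ (fun i x => f i x + g i x) l (fun x => F x + G x) := by
  rw [tendstoInMeasure_iff_norm] at hf hg ⊢
  intro ε hε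
  have hsum := (hf (ε / 2) (half_pos hε)).add (hg (ε / 2) (half_pos hε))
  rw [add_zero] at hsum
  refine tendsto_of_tendsto_of_tendsto_of_le_of_le tendsto_const_nhds hsum
    (fun _ => zero_le) fun i => (measure_mono fun x hx => ?_).trans (measure_union_le _ _)
  by_contra! hlt
  simp only [Set.mem_union, Set.mem_ofPred_eq, not_or, not_le] at hx hlt
  have := norm_add_le (f i x - F x) (g i x - G x)
  rw [add_sub_add_comm] at hx
  linarith [hlt.1, hlt.2]

theorem tendstoInMeasure_finset_sum [SeminormedAddCommGroup E] {κ : Type*} (s : Finset κ)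
    {f : κ → ι → α → E} {F : κ → α → E} (hf : ∀ j ∈ s, TendstoInMeasure μ (f j) l (F j)) :
    TendstoInMeasure μ (fun i x => ∑ j ∈ s, f j i x) l (fun x => ∑ j ∈ s, F j x) := by
  classical
  induction s using Finset.induction_on with
  | empty =>
    rw [tendstoInMeasure_iff_norm]
    intro ε hε
    simp [hε.not_ge, tendsto_const_nhds]
  | insert a s ha ih =>
    simp_rw [Finset.sum_insert ha]
    exact TendstoInMeasure.add (hf a (Finset.mem_insert_self a s))
      (ih fun j hj => hf j (Finset.mem_insert_of_mem hj))

theorem tendstoInMeasure_zero_of_norm_le_mul {E' : Type*} [SeminormedAddCommGroup E]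
    [SeminormedAddCommGroup E'] {f : ι → α → E} {g : ι → α → E'} {C : ℝ}
    (hfg : ∀ i x, ‖f i x‖ ≤ C * ‖g i x‖) (hg : TendstoInMeasure μ g l fun _ => 0) :
    TendstoInMeasure μ f l fun _ => 0 := by
  rw [tendstoInMeasure_iff_norm] at hg ⊢
  intro ε hε
  have hC : 0 < |C| + 1 := by positivity
  refine tendsto_of_tendsto_of_tendsto_of_le_of_le tendsto_const_nhds
    (hg (ε / (|C| + 1)) (div_pos hε hC)) (fun _ => zero_le) fun i => measure_mono fun x hx => ?_
  simp only [sub_zero, Set.mem_ofPred_eq] at hx ⊢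
  rw [div_le_iff₀ hC]
  calc ε ≤ C * ‖g i x‖ := hx.trans (hfg i x)
    _ ≤ ‖g i x‖ * (|C| + 1) := by nlinarith [le_abs_self C, norm_nonneg (g i x)]

theorem tendstoInMeasure_of_identDistrib {β : Type*} [MeasurableSpace β] {ν : Measure β}
    [PseudoMetricSpace E] [MeasurableSpace E] [OpensMeasurableSpace E]
    {f : ι → α → E} {g : ι → β → E} {c : E} (hfg : ∀ i, IdentDistrib (f i) (g i) μ ν)
    (hg : TendstoInMeasure ν g l fun _ => c) :
    TendstoInMeasure μ f l fun _ => c := by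
  rw [tendstoInMeasure_iff_dist] at hg ⊢
  intro ε hε
  have hs : MeasurableSet {y : E | ε ≤ dist y c} :=
    (isClosed_le continuous_const (continuous_id.dist continuous_const)).measurableSet
  convert hg ε hε using 1
  funext i
  exact (hfg i).measure_mem_eq hs

end ConvergenceInMeasure

section WeakLaw

variable {Ω : Type*} {mΩ : MeasurableSpace Ω} {μ : Measure Ω} [IsFiniteMeasure μ]
  {X : ℕ → Ω → ℝ} {v : ℝ}

theorem measure_le_abs_inv_mul_sum_range_le (hX : ∀ i, MemLp (X i) 2 μ)
    (hmean : ∀ i, μ[X i] = 0) (hvar : ∀ i, variance (X i) μ ≤ v)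
    (hindep : Pairwise fun i j => IndepFun (X i) (X j) μ) {m n : ℕ} (hmn : m ≤ n) (hn : 0 < n)
    {ε : ℝ} (hε : 0 < ε) :
    μ {ω | ε ≤ |(n : ℝ)⁻¹ * ∑ i ∈ Finset.range m, X i ω|} ≤ ENNReal.ofReal (v / (ε ^ 2 * n)) := by
  have hn' : (0 : ℝ) < n := Nat.cast_pos.mpr hn
  have hv : 0 ≤ v := (variance_nonneg _ _).trans (hvar 0)
  set Y := ∑ i ∈ Finset.range m, X i with hY_def
  have hY : MemLp Y 2 μ := memLp_finsetSum' _ fun i _ => hX i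
  have hY_mean : μ[Y] = 0 := by
    simp only [hY_def, Finset.sum_apply]
    rw [integral_finsetSum _ fun i _ => (hX i).integrable one_le_two]
    simp [hmean]
  have hY_var : variance Y μ ≤ n * v := by
    rw [hY_def, IndepFun.variance_sum (fun i _ => hX i) fun i _ j _ hij => hindep hij]
    calc ∑ i ∈ Finset.range m, variance (X i) μ ≤ ∑ _i ∈ Finset.range m, v :=
          Finset.sum_le_sum fun i _ => hvar i
      _ = m * v := by simp
      _ ≤ n * v := by gcongr
  have hset : {ω | ε ≤ |(n : ℝ)⁻¹ * ∑ i ∈ Finset.range m, X i ω|}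
      = {ω | ε * n ≤ |Y ω - μ[Y]|} := by
    ext ω
    simp only [Set.mem_ofPred_eq, hY_mean, sub_zero]
    rw [hY_def, Finset.sum_apply, abs_mul, abs_inv, Nat.abs_cast, inv_mul_eq_div, le_div_iff₀ hn']
  calc μ {ω | ε ≤ |(n : ℝ)⁻¹ * ∑ i ∈ Finset.range m, X i ω|}
      ≤ ENNReal.ofReal (variance Y μ / (ε * n) ^ 2) :=
        hset ▸ meas_ge_le_variance_div_sq hY (by positivity)
    _ ≤ ENNReal.ofReal (v / (ε ^ 2 * n)) := by
        refine ENNReal.ofReal_le_ofReal ?_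
        calc variance Y μ / (ε * n) ^ 2 ≤ n * v / (ε * n) ^ 2 := by gcongr
          _ = v / (ε ^ 2 * n) := by field_simp

theorem tendstoInMeasure_inv_mul_sum_range (hX : ∀ i, MemLp (X i) 2 μ)
    (hmean : ∀ i, μ[X i] = 0) (hvar : ∀ i, variance (X i) μ ≤ v)
    (hindep : Pairwise fun i j => IndepFun (X i) (X j) μ) {m : ℕ → ℕ} (hm : ∀ n, m n ≤ n) :
    TendstoInMeasure μ (fun (n : ℕ) ω => (n : ℝ)⁻¹ * ∑ i ∈ Finset.range (m n), X i ω) atTop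
      fun _ => 0 := by
  rw [tendstoInMeasure_iff_dist]
  intro ε hε
  have hbound : Tendsto (fun n : ℕ => ENNReal.ofReal (v / (ε ^ 2 * n))) atTop (𝓝 0) := by
    have := ENNReal.tendsto_ofReal (tendsto_const_div_atTop_nhds_zero_nat (v / ε ^ 2))
    rw [ENNReal.ofReal_zero] at this
    convert this using 3
    rw [div_div]
  refine tendsto_of_tendsto_of_tendsto_of_le_of_le' tendsto_const_nhds hbound
    (Eventually.of_forall fun _ => zero_le) ?_
  filter_upwards [eventually_gt_atTop 0] with n hn
  simpa only [Real.dist_eq, sub_zero] using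
    measure_le_abs_inv_mul_sum_range_le hX hmean hvar hindep (hm n) hn hε

end WeakLaw

theorem norm_smul_sum_sum_mul_smul_le {E ι κ : Type*} [SeminormedAddCommGroup E]
    [NormedSpace ℝ E] (t : Finset ι) (s : ι → Finset κ) (c : ℝ) (d : ι → ℝ) (e : ι → κ → ℝ)
    (x : ι → E) :
    ‖c • ∑ j ∈ t, ∑ i ∈ s j, (d j * e j i) • x j‖
      ≤ ∑ j ∈ t, |d j| * ‖x j‖ * |c * ∑ i ∈ s j, e j i| := by
  have hj : ∀ j, c • ∑ i ∈ s j, (d j * e j i) • x j = (d j * (c * ∑ i ∈ s j, e j i)) • x j := by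
    intro j
    rw [← Finset.sum_smul, ← Finset.mul_sum, smul_smul, mul_left_comm]
  rw [Finset.smul_sum]
  simp_rw [hj]
  refine (norm_sum_le _ _).trans (Finset.sum_le_sum fun j _ => le_of_eq ?_)
  rw [norm_smul, Real.norm_eq_abs, abs_mul]
  ring

theorem norm_designVec_le {P Q : ℕ} (a : EuclideanSpace ℝ (Fin P))
    (z : EuclideanSpace ℝ (Fin Q)) : ‖designVec a z‖ ≤ 1 + ‖a‖ + ‖z‖ := by
  have hsq : ‖designVec a z‖ ^ 2 = 1 + ‖a‖ ^ 2 + ‖z‖ ^ 2 := by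
    simp [EuclideanSpace.norm_sq_eq, designVec, Fin.sum_univ_add]
  nlinarith [norm_nonneg (designVec a z), norm_nonneg a, norm_nonneg z,
    mul_nonneg (norm_nonneg a) (norm_nonneg z)]

namespace LagoSetup

variable {Ω : Type} [MeasurableSpace Ω] {Pr : Measure Ω} {J1 J2 P Q : ℕ}
  (S : LagoSetup Ω Pr J1 J2 P Q)

theorem n2_le (n : ℕ) (j : Fin J2) : S.n2 n j ≤ n := by
  have := Finset.single_le_sum (fun j' _ => Nat.zero_le (S.n2 n j')) (Finset.mem_univ j)
  have := S.sum_sizes n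
  omega

theorem norm_X2v_le (n : ℕ) (j : Fin J2) (ω : Ω) :
    ‖S.X2v n j ω‖ ≤ 1 + S.bound + ∑ j', ‖S.z2 j'‖ := by
  have := Finset.single_le_sum (fun j' _ => norm_nonneg (S.z2 j')) (Finset.mem_univ j)
  have hX : ‖S.X2v n j ω‖ ≤ 1 + ‖S.A2 n j ω‖ + ‖S.z2 j‖ := norm_designVec_le _ _
  linarith [S.A2_bdd n j ω]

theorem exists_abs_deriv_mul_norm_X2v_le :
    ∃ C, ∀ n j ω, ∀ β ∈ S.B, |deriv S.h ⟪β, S.X2v n j ω⟫| * ‖S.X2v n j ω‖ ≤ C := by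
  have hK := S.B_compact.prod (isCompact_closedBall (0 : EuclideanSpace ℝ (Fin (1 + P + Q))) (1 + S.bound + ∑ j', ‖S.z2 j'‖))
  have hh' := S.h_smooth.continuous_deriv (by norm_num)
  have hcont : Continuous fun p : EuclideanSpace ℝ (Fin (1 + P + Q)) ×
      EuclideanSpace ℝ (Fin (1 + P + Q)) => |deriv S.h ⟪p.1, p.2⟫| * ‖p.2‖ := by
    fun_prop
  obtain ⟨C, hC⟩ := hK.exists_bound_of_continuousOn hcont.continuousOn
  refine ⟨C, fun n j ω β hβ => (Real.le_norm_self _).trans (hC (β, S.X2v n j ω) ⟨hβ, ?_⟩)⟩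
  exact mem_closedBall_zero_iff.mpr (S.norm_X2v_le n j ω)

theorem exists_sSup_noise_le : ∃ C, ∀ (n : ℕ) ω,
    sSup ((fun β => ‖(n : ℝ)⁻¹ • ∑ j, ∑ i ∈ Finset.range (S.n2 n j),
      (deriv S.h ⟪β, S.X2v n j ω⟫ * S.ε2n n j i ω) • S.X2v n j ω‖) '' S.B)
      ≤ C * ∑ j, |(n : ℝ)⁻¹ * ∑ i ∈ Finset.range (S.n2 n j), S.ε2n n j i ω| := by
  obtain ⟨C, hC⟩ := S.exists_abs_deriv_mul_norm_X2v_le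
  refine ⟨max C 0, fun n ω => Real.sSup_le ?_ (by positivity)⟩
  rintro _ ⟨β, hβ, rfl⟩
  refine (norm_smul_sum_sum_mul_smul_le _ _ _ (fun j => deriv S.h ⟪β, S.X2v n j ω⟫)
    (fun j i => S.ε2n n j i ω) (fun j => S.X2v n j ω)).trans ?_
  rw [Finset.mul_sum]
  exact Finset.sum_le_sum fun j _ =>
    mul_le_mul_of_nonneg_right ((hC n j ω β hβ).trans (le_max_left _ _)) (abs_nonneg _)

theorem identDistrib_noise_mean (n : ℕ) (j : Fin J2) :
    IdentDistrib (fun ω => (n : ℝ)⁻¹ * ∑ i ∈ Finset.range (S.n2 n j), S.ε2n n j i ω)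
      (fun ω => (n : ℝ)⁻¹ * ∑ i ∈ Finset.range (S.n2 n j), S.ε2 j i ω) Pr Pr := by
  have h1 := S.meas_ε1
  have h2 := S.measA2 n
  have h3 := S.meas_ε2n n
  have h4 := S.meas_ε2
  have hjoint : IdentDistrib
      (fun ω => ((fun p : Fin J1 × ℕ => S.ε1 p.1 p.2 ω), (fun j => S.A2 n j ω),
        (fun p : Fin J2 × ℕ => S.ε2n n p.1 p.2 ω)))
      (fun ω => ((fun p : Fin J1 × ℕ => S.ε1 p.1 p.2 ω), (fun j => S.A2 n j ω),
        (fun p : Fin J2 × ℕ => S.ε2 p.1 p.2 ω))) Pr Pr :=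
    ⟨by fun_prop, by fun_prop, S.jointLaw n⟩
  exact hjoint.comp (u := fun t => (n : ℝ)⁻¹ * ∑ i ∈ Finset.range (S.n2 n j), t.2.2 (j, i))
    (by fun_prop)

theorem tendstoInMeasure_coupled_noise_mean [IsProbabilityMeasure Pr] (j : Fin J2) :
    TendstoInMeasure Pr
      (fun (n : ℕ) ω => (n : ℝ)⁻¹ * ∑ i ∈ Finset.range (S.n2 n j), S.ε2 j i ω) atTop
      fun _ => 0 := by
  have hmemLp : ∀ i, MemLp (S.ε2 j i) 2 Pr := fun i =>
    MemLp.of_bound (S.meas_ε2 j i).aestronglyMeasurable S.bound (ae_of_all _ (S.ε2_bdd j i))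
  have hvar : ∀ i, variance (S.ε2 j i) Pr ≤ S.bound ^ 2 := fun i => by
    have := variance_le_sq_of_bounded (μ := Pr) (ae_of_all _ fun ω => abs_le.mp (S.ε2_bdd j i ω))
      (S.meas_ε2 j i).aemeasurable
    rwa [sub_neg_eq_add, ← two_mul, mul_div_cancel_left₀ _ two_ne_zero] at this
  refine tendstoInMeasure_inv_mul_sum_range hmemLp (S.ε2_mean j) hvar (fun i i' hii' => ?_)
    (S.n2_le · j)
  exact S.ε_indep.indepFun (i := Sum.inr (j, i)) (j := Sum.inr (j, i')) (by simpa using hii')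

end LagoSetup

/-- **Uniform vanishing of the stage-2 noise term (the G₂ claim):**
sup_{β ∈ B} ‖(1/n) Σ_{j≤J₂} Σ_{i≤n_j^{(2)}(n)} h′(⟨β, X_j^{(2,n)}⟩) X_j^{(2,n)} ε_{ij}^{(2,n)}‖ → 0
in probability. -/
theorem lago_stage2_noise_term
    {Ω : Type} [MeasurableSpace Ω] {Pr : Measure Ω} [IsProbabilityMeasure Pr]
    {J1 J2 P Q : ℕ} (S : LagoSetup Ω Pr J1 J2 P Q) :
    TendstoInMeasure Pr
      (fun (n : ℕ) ω => sSup ((fun β =>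
        ‖(n : ℝ)⁻¹ • ∑ j, ∑ i ∈ Finset.range (S.n2 n j),
          (deriv S.h ⟪β, S.X2v n j ω⟫ * S.ε2n n j i ω) • S.X2v n j ω‖) '' S.B))
      atTop (fun _ => (0 : ℝ)) := by
  have hmean (j : Fin J2) : TendstoInMeasure Pr
      (fun (n : ℕ) ω => |(n : ℝ)⁻¹ * ∑ i ∈ Finset.range (S.n2 n j), S.ε2n n j i ω|) atTop
      fun _ => 0 :=
    tendstoInMeasure_zero_of_norm_le_mul (C := 1) (fun n ω => by simp)
      (tendstoInMeasure_of_identDistrib (S.identDistrib_noise_mean · j)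
        (S.tendstoInMeasure_coupled_noise_mean j))
  have hsum := tendstoInMeasure_finset_sum Finset.univ fun j _ => hmean j
  simp only [Finset.sum_const_zero] at hsum
  obtain ⟨C, hC⟩ := S.exists_sSup_noise_le
  refine tendstoInMeasure_zero_of_norm_le_mul (C := C) (fun n ω => ?_) hsum
  rw [Real.norm_of_nonneg (Real.sSup_nonneg (by rintro _ ⟨β, -, rfl⟩; exact norm_nonneg _)),
    Real.norm_of_nonneg (by positivity)]
  exact hC n ω
end
end

section
/- Convergence of the Jacobian of the estimating function. In the two-stage LAGO setup, let D U_n(β) denote the d × d matrix of partial derivatives of the map β ↦ U_n(β). For every sequence (β̃_n) of B-valued random vectors with β̃_n → β* in probability, −D U_n(β̃_n) → J(β*) in probability (entrywise), where J(β*) := Σ_{k=1,2} Σ_j α_{jk} h′(⟨β*, x_j^{(k)}⟩)² x_j^{(k)} (x_j^{(k)})ᵀ. -/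
open MeasureTheory ProbabilityTheory Filter
open scoped RealInnerProductSpace BigOperators NNReal Topology ENNReal

noncomputable section

/-!
Differentiating `U_n` center by center, `-D U_n(β)` is a sum over centers of
`((m/n) w(β, x) - h''(⟨β, x⟩) (∑ᵢ εᵢ)/n) x xᵀ`, where `m` is the center's sample size and
`w(β, x) = h'(⟨β, x⟩)² - h''(⟨β, x⟩) (h(⟨β*, x⟩) - h(⟨β, x⟩))`. Each summand is a continuous
function of `(β, x, m/n, (∑ᵢ εᵢ)/n)`. Along the sequence these inputs converge in probability to
constants: `β̃_n → β*` and `X_j^{(2,n)} → x_j^{(2)}` by assumption, `m/n → α`, and the error means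
tend to `0` by the strong law of large numbers (for stage 2 after passing to the coupled i.i.d.
errors, which have the same law). The continuous mapping theorem for convergence in probability to
constants then gives the limit `α h'(⟨β*, x⟩)² x xᵀ`, whose sum over centers is `J(β*)`.
-/

namespace MeasureTheory

variable {Ω ι E F : Type*} [MeasurableSpace Ω] {μ : Measure Ω} {l : Filter ι}

theorem tendstoInMeasure_const_iff [PseudoMetricSpace E] {f : ι → Ω → E} {c : E} :
    TendstoInMeasure μ f l (fun _ => c) ↔
      ∀ U ∈ 𝓝 c, Tendsto (fun n => μ {ω | f n ω ∉ U}) l (𝓝 0) := by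
  rw [tendstoInMeasure_iff_dist]
  constructor
  · intro hf U hU
    obtain ⟨ε, hε, hball⟩ := Metric.mem_nhds_iff.mp hU
    refine tendsto_of_tendsto_of_tendsto_of_le_of_le tendsto_const_nhds (hf ε hε)
      (fun n => zero_le) fun n => measure_mono fun ω hω => ?_
    by_contra h
    exact hω (hball (Metric.mem_ball.mpr (not_le.mp h)))
  · intro hf ε hε
    simpa [Metric.mem_ball] using hf _ (Metric.ball_mem_nhds c hε)

theorem tendstoInMeasure_const_of_tendsto [PseudoMetricSpace E] {r : ι → E} {c : E}
    (hr : Tendsto r l (𝓝 c)) : TendstoInMeasure μ (fun n _ => r n) l (fun _ => c) := by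
  refine tendstoInMeasure_const_iff.mpr fun U hU => tendsto_const_nhds.congr' ?_
  filter_upwards [hr hU] with n hn
  simp [show r n ∈ U from hn]

theorem TendstoInMeasure.comp_continuousAt [PseudoMetricSpace E] [PseudoMetricSpace F]
    {f : ι → Ω → E} {a : E} (hf : TendstoInMeasure μ f l (fun _ => a)) {g : E → F}
    (hg : ContinuousAt g a) : TendstoInMeasure μ (fun n ω => g (f n ω)) l (fun _ => g a) :=
  tendstoInMeasure_const_iff.mpr fun _ hU => tendstoInMeasure_const_iff.mp hf _ (hg hU)

theorem TendstoInMeasure.prodMk_of_const [PseudoMetricSpace E] [PseudoMetricSpace F]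
    {f : ι → Ω → E} {g : ι → Ω → F} {a : E} {b : F}
    (hf : TendstoInMeasure μ f l (fun _ => a)) (hg : TendstoInMeasure μ g l (fun _ => b)) :
    TendstoInMeasure μ (fun n ω => (f n ω, g n ω)) l (fun _ => (a, b)) := by
  refine tendstoInMeasure_const_iff.mpr fun U hU => ?_
  obtain ⟨V, hV, W, hW, hVW⟩ := mem_nhds_prod_iff.mp hU
  have hsum := (tendstoInMeasure_const_iff.mp hf V hV).add (tendstoInMeasure_const_iff.mp hg W hW)
  rw [add_zero] at hsum
  refine tendsto_of_tendsto_of_tendsto_of_le_of_le tendsto_const_nhds hsum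
    (fun n => zero_le) fun n => (measure_mono fun ω hω => ?_).trans (measure_union_le _ _)
  by_contra h
  simp only [Set.mem_union, Set.mem_ofPred_eq, not_or, not_not] at h
  exact hω (hVW ⟨h.1, h.2⟩)

theorem TendstoInMeasure.add_of_const [PseudoMetricSpace E] [Add E] [ContinuousAdd E]
    {f g : ι → Ω → E} {a b : E}
    (hf : TendstoInMeasure μ f l (fun _ => a)) (hg : TendstoInMeasure μ g l (fun _ => b)) :
    TendstoInMeasure μ (fun n ω => f n ω + g n ω) l (fun _ => a + b) :=
  (hf.prodMk_of_const hg).comp_continuousAt continuous_add.continuousAt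

theorem tendstoInMeasure_finset_sum_of_const [PseudoMetricSpace E] [AddCommMonoid E]
    [ContinuousAdd E] {κ : Type*} (s : Finset κ) {f : κ → ι → Ω → E} {c : κ → E}
    (hf : ∀ j ∈ s, TendstoInMeasure μ (f j) l (fun _ => c j)) :
    TendstoInMeasure μ (fun n ω => ∑ j ∈ s, f j n ω) l (fun _ => ∑ j ∈ s, c j) := by
  classical
  induction s using Finset.induction with
  | empty =>
    simpa using
      tendstoInMeasure_const_of_tendsto (μ := μ) (tendsto_const_nhds (x := (0 : E)) (f := l))
  | insert j s hj ih =>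
    simp only [Finset.sum_insert hj]
    exact (hf j (s.mem_insert_self j)).add_of_const
      (ih fun i hi => hf i (Finset.mem_insert_of_mem hi))

theorem TendstoInMeasure.of_map_eq [PseudoMetricSpace E] [MeasurableSpace E]
    [OpensMeasurableSpace E] {f f' : ι → Ω → E} {c : E}
    (hf : ∀ n, AEMeasurable (f n) μ) (hf' : ∀ n, AEMeasurable (f' n) μ)
    (hlaw : ∀ n, μ.map (f n) = μ.map (f' n)) (h : TendstoInMeasure μ f' l (fun _ => c)) :
    TendstoInMeasure μ f l (fun _ => c) := by
  rw [tendstoInMeasure_iff_dist] at h ⊢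
  intro ε hε
  have hmeas : MeasurableSet {y : E | ε ≤ dist y c} :=
    (isClosed_le continuous_const (continuous_id.dist continuous_const)).measurableSet
  refine (h ε hε).congr fun n => ?_
  show μ (f' n ⁻¹' {y | ε ≤ dist y c}) = μ (f n ⁻¹' {y | ε ≤ dist y c})
  rw [← Measure.map_apply_of_aemeasurable (hf' n) hmeas,
    ← Measure.map_apply_of_aemeasurable (hf n) hmeas, hlaw]

theorem tendstoInMeasure_sum_range_div [IsFiniteMeasure μ] {X : ℕ → Ω → ℝ}
    (hint : Integrable (X 0) μ) (hindep : Pairwise fun i j => IndepFun (X i) (X j) μ)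
    (hident : ∀ i, IdentDistrib (X i) (X 0) μ μ) {m : ℕ → ℕ} {α : ℝ} (hα : 0 < α)
    (hm : Tendsto (fun n => (m n : ℝ) / n) atTop (𝓝 α)) :
    TendstoInMeasure μ (fun n ω => (∑ i ∈ Finset.range (m n), X i ω) / n) atTop
      (fun _ => α * μ[X 0]) := by
  have hm_top : Tendsto m atTop atTop := by
    rw [← tendsto_natCast_atTop_iff (R := ℝ)]
    refine (Tendsto.pos_mul_atTop hα hm tendsto_natCast_atTop_atTop).congr' ?_
    filter_upwards [eventually_ne_atTop 0] with n hn
    field_simp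
  refine tendstoInMeasure_of_tendsto_ae (fun n => ?_) ?_
  · exact ((Finset.aemeasurable_fun_sum _ fun i _ => (hident i).aemeasurable_fst).div_const
      _).aestronglyMeasurable
  filter_upwards [strong_law_ae X hint hindep hident] with ω hω
  refine (hm.mul (hω.comp hm_top)).congr' ?_
  filter_upwards [hm_top.eventually_ne_atTop 0] with n hn
  simp only [Function.comp_apply, smul_eq_mul]
  field_simp

end MeasureTheory

section CenterScore

variable {E : Type*} [NormedAddCommGroup E] [InnerProductSpace ℝ E]

/-- The summands of `n • U_n(b)` contributed by one center with design vector `x`, sample size `m`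
and errors `e`. -/
def centerScore (h : ℝ → ℝ) (βs x : E) (m : ℕ) (e : ℕ → ℝ) (b : E) : E :=
  ∑ i ∈ Finset.range m, (deriv h ⟪b, x⟫ * (h ⟪βs, x⟫ + e i - h ⟪b, x⟫)) • x

/-- `-(d/dt) [h'(t) (h ⟪βs, x⟫ - h t)]` at `t = ⟪b, x⟫`. -/
def observedInfo (h : ℝ → ℝ) (βs b x : E) : ℝ :=
  deriv h ⟪b, x⟫ ^ 2 - deriv (deriv h) ⟪b, x⟫ * (h ⟪βs, x⟫ - h ⟪b, x⟫)

theorem hasFDerivAt_centerScore {h : ℝ → ℝ} (hh : ContDiff ℝ 2 h) (βs x : E) (m : ℕ)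
    (e : ℕ → ℝ) (b : E) :
    HasFDerivAt (centerScore h βs x m e)
      ((deriv (deriv h) ⟪b, x⟫ * ∑ i ∈ Finset.range m, e i - m * observedInfo h βs b x) •
        InnerProductSpace.rankOne ℝ x x) b := by
  set t := ⟪b, x⟫
  set c := deriv (deriv h) t * (h ⟪βs, x⟫ - h t) - deriv h t * deriv h t
  have hinner : HasFDerivAt (fun b : E => ⟪b, x⟫) (innerSL ℝ x) b := by
    convert (innerSL ℝ x).hasFDerivAt using 1
    ext
    simp [real_inner_comm]
  have hterm : ∀ i,
      HasFDerivAt (fun b : E => (deriv h ⟪b, x⟫ * (h ⟪βs, x⟫ + e i - h ⟪b, x⟫)) • x)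
        ((deriv (deriv h) t * e i + c) • InnerProductSpace.rankOne ℝ x x) b := by
    intro i
    have hψ : HasDerivAt (fun s => deriv h s * (h ⟪βs, x⟫ + e i - h s))
        (deriv (deriv h) t * (h ⟪βs, x⟫ + e i - h t) + deriv h t * -deriv h t) t :=
      (hh.differentiable_deriv_two t).hasDerivAt.mul
        ((hh.differentiable two_ne_zero t).hasDerivAt.const_sub _)
    refine ((hψ.comp_hasFDerivAt b hinner).smul_const x).congr_fderiv ?_
    ext v
    simp only [mul_neg, ContinuousLinearMap.smulRight_apply, smul_apply, coe_innerSL_apply,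
      smul_eq_mul, InnerProductSpace.rankOne_apply, smul_smul, c]
    congr 1
    ring
  refine (HasFDerivAt.fun_sum (u := Finset.range m) fun i _ => hterm i).congr_fderiv ?_
  rw [← Finset.sum_smul, Finset.sum_add_distrib, ← Finset.mul_sum, Finset.sum_const,
    Finset.card_range, nsmul_eq_mul, observedInfo]
  congr 1
  simp only [c, t]
  ring

end CenterScore

section CenterJacobian

variable {ι : Type*} [Fintype ι]

/-- Entry `(p, q)` of one center's contribution to `-D U_n(b)`, in terms of `r = m / n` and the
error mean `a = (∑ e) / n`. -/
def centerNegJacobianEntry (h : ℝ → ℝ) (βs b x : EuclideanSpace ℝ ι) (r a : ℝ) (p q : ι) : ℝ :=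
  (r * observedInfo h βs b x - deriv (deriv h) ⟪b, x⟫ * a) * (x p * x q)

theorem tendstoInMeasure_centerNegJacobianEntry {Ω : Type*} [MeasurableSpace Ω] {μ : Measure Ω}
    {h : ℝ → ℝ} (hh : ContDiff ℝ 2 h) {βs x : EuclideanSpace ℝ ι} {α : ℝ}
    {b X : ℕ → Ω → EuclideanSpace ℝ ι} {r : ℕ → ℝ} {a : ℕ → Ω → ℝ}
    (hb : TendstoInMeasure μ b atTop (fun _ => βs)) (hX : TendstoInMeasure μ X atTop (fun _ => x))
    (hr : Tendsto r atTop (𝓝 α)) (ha : TendstoInMeasure μ a atTop (fun _ => 0)) (p q : ι) :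
    TendstoInMeasure μ (fun n ω => centerNegJacobianEntry h βs (b n ω) (X n ω) (r n) (a n ω) p q)
      atTop (fun _ => α * deriv h ⟪βs, x⟫ ^ 2 * (x p * x q)) := by
  have hc0 : Continuous h := hh.continuous
  have hc1 : Continuous (deriv h) := hh.continuous_deriv one_le_two
  have hc2 : Continuous (deriv (deriv h)) := (hh.deriv' (n := 1)).continuous_deriv le_rfl
  have hcont : Continuous fun y : EuclideanSpace ℝ ι × EuclideanSpace ℝ ι × ℝ × ℝ =>
      centerNegJacobianEntry h βs y.1 y.2.1 y.2.2.1 y.2.2.2 p q := by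
    unfold centerNegJacobianEntry observedInfo
    fun_prop
  have hlim :
      centerNegJacobianEntry h βs βs x α 0 p q = α * deriv h ⟪βs, x⟫ ^ 2 * (x p * x q) := by
    unfold centerNegJacobianEntry observedInfo
    ring
  have hr' : TendstoInMeasure μ (fun n (_ : Ω) => r n) atTop (fun _ => α) :=
    tendstoInMeasure_const_of_tendsto hr
  have hra := hr'.prodMk_of_const ha
  have hXra := hX.prodMk_of_const hra
  have hinputs := hb.prodMk_of_const hXra
  rw [← hlim]
  exact hinputs.comp_continuousAt hcont.continuousAt

end CenterJacobian

theorem continuous_designVec {P Q : ℕ} (z : EuclideanSpace ℝ (Fin Q)) :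
    Continuous fun a : EuclideanSpace ℝ (Fin P) => designVec a z := by
  unfold designVec
  fun_prop

namespace LagoSetup

variable {Ω : Type} [MeasurableSpace Ω] {Pr : Measure Ω} {J1 J2 P Q : ℕ}

theorem tendstoInMeasure_X2v (S : LagoSetup Ω Pr J1 J2 P Q) (j : Fin J2) :
    TendstoInMeasure Pr (fun n ω => S.X2v n j ω) atTop (fun _ => S.x2v j) :=
  (S.A2_tendsto j).comp_continuousAt (continuous_designVec (S.z2 j)).continuousAt

theorem neg_fderiv_U_apply (S : LagoSetup Ω Pr J1 J2 P Q) (n : ℕ) (ω : Ω)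
    (β : EuclideanSpace ℝ (Fin (1 + P + Q))) (p q : Fin (1 + P + Q)) :
    -(fderiv ℝ (fun b => S.U n b ω) β (EuclideanSpace.single q 1) p) =
      (∑ j, centerNegJacobianEntry S.h S.βstar β (S.x1v j) (S.n1 n j / n)
          ((∑ i ∈ Finset.range (S.n1 n j), S.ε1 j i ω) / n) p q) +
        ∑ j, centerNegJacobianEntry S.h S.βstar β (S.X2v n j ω) (S.n2 n j / n)
          ((∑ i ∈ Finset.range (S.n2 n j), S.ε2n n j i ω) / n) p q := by
  have hU : HasFDerivAt (fun b => S.U n b ω) _ β :=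
    ((HasFDerivAt.fun_sum (u := Finset.univ) fun j _ => hasFDerivAt_centerScore S.h_smooth
      S.βstar (S.x1v j) (S.n1 n j) (fun i => S.ε1 j i ω) β).add
    (HasFDerivAt.fun_sum (u := Finset.univ) fun j _ => hasFDerivAt_centerScore S.h_smooth
      S.βstar (S.X2v n j ω) (S.n2 n j) (fun i => S.ε2n n j i ω) β)).const_smul (n : ℝ)⁻¹
  rw [hU.fderiv]
  simp only [smul_add, add_apply, smul_apply, sum_apply, InnerProductSpace.rankOne_apply,
    EuclideanSpace.inner_single_right, Real.ringHom_apply, one_mul, PiLp.add_apply,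
    PiLp.smul_apply, WithLp.ofLp_sum, WithLp.ofLp_smul, Finset.sum_apply, Pi.smul_apply,
    smul_eq_mul, neg_add_rev]
  rw [add_comm]
  congr 1 <;>
  · rw [Finset.mul_sum, ← Finset.sum_neg_distrib]
    refine Finset.sum_congr rfl fun j _ => ?_
    unfold centerNegJacobianEntry
    ring

theorem tendstoInMeasure_stage1_errorMean [IsFiniteMeasure Pr] (S : LagoSetup Ω Pr J1 J2 P Q)
    (j : Fin J1) :
    TendstoInMeasure Pr (fun n ω => (∑ i ∈ Finset.range (S.n1 n j), S.ε1 j i ω) / n) atTop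
      (fun _ => 0) := by
  have hint : Integrable (S.ε1 j 0) Pr :=
    .of_bound (S.meas_ε1 j 0).aestronglyMeasurable S.bound (ae_of_all _ (S.ε1_bdd j 0))
  have hindep : Pairwise fun i i' => IndepFun (S.ε1 j i) (S.ε1 j i') Pr := fun i i' hii' => by
    simpa using S.ε_indep.indepFun (i := .inl (j, i)) (j := .inl (j, i')) (by simpa using hii')
  simpa [S.ε1_mean] using
    tendstoInMeasure_sum_range_div hint hindep (S.ε1_ident j) (S.α1_pos j) (S.α1_lim j)

theorem tendstoInMeasure_stage2_coupledErrorMean [IsFiniteMeasure Pr]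
    (S : LagoSetup Ω Pr J1 J2 P Q) (j : Fin J2) :
    TendstoInMeasure Pr (fun n ω => (∑ i ∈ Finset.range (S.n2 n j), S.ε2 j i ω) / n) atTop
      (fun _ => 0) := by
  have hint : Integrable (S.ε2 j 0) Pr :=
    .of_bound (S.meas_ε2 j 0).aestronglyMeasurable S.bound (ae_of_all _ (S.ε2_bdd j 0))
  have hindep : Pairwise fun i i' => IndepFun (S.ε2 j i) (S.ε2 j i') Pr := fun i i' hii' => by
    simpa using S.ε_indep.indepFun (i := .inr (j, i)) (j := .inr (j, i')) (by simpa using hii')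
  simpa [S.ε2_mean] using
    tendstoInMeasure_sum_range_div hint hindep (S.ε2_ident j) (S.α2_pos j) (S.α2_lim j)

theorem map_ε2n_eq (S : LagoSetup Ω Pr J1 J2 P Q) (n : ℕ) :
    Pr.map (fun ω (p : Fin J2 × ℕ) => S.ε2n n p.1 p.2 ω) =
      Pr.map (fun ω (p : Fin J2 × ℕ) => S.ε2 p.1 p.2 ω) := by
  have := S.meas_ε1
  have := S.meas_ε2
  have := S.meas_ε2n n
  have := S.measA2 n
  have h := congrArg (Measure.map fun y => y.2.2) (S.jointLaw n)
  rwa [Measure.map_map (by fun_prop) (by fun_prop),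
    Measure.map_map (by fun_prop) (by fun_prop)] at h

theorem tendstoInMeasure_stage2_errorMean [IsFiniteMeasure Pr] (S : LagoSetup Ω Pr J1 J2 P Q)
    (j : Fin J2) :
    TendstoInMeasure Pr (fun n ω => (∑ i ∈ Finset.range (S.n2 n j), S.ε2n n j i ω) / n) atTop
      (fun _ => 0) := by
  let mean (n : ℕ) (y : Fin J2 × ℕ → ℝ) : ℝ := (∑ i ∈ Finset.range (S.n2 n j), y (j, i)) / n
  have hmean (n : ℕ) : Measurable (mean n) := by fun_prop
  have hε2n (n : ℕ) : Measurable fun ω (p : Fin J2 × ℕ) => S.ε2n n p.1 p.2 ω :=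
    measurable_pi_lambda _ fun p => S.meas_ε2n n p.1 p.2
  have hε2 : Measurable fun ω (p : Fin J2 × ℕ) => S.ε2 p.1 p.2 ω :=
    measurable_pi_lambda _ fun p => S.meas_ε2 p.1 p.2
  refine (S.tendstoInMeasure_stage2_coupledErrorMean j).of_map_eq
    (fun n => ((hmean n).comp (hε2n n)).aemeasurable)
    (fun n => ((hmean n).comp hε2).aemeasurable) fun n => ?_
  change Pr.map (mean n ∘ fun ω (p : Fin J2 × ℕ) => S.ε2n n p.1 p.2 ω) = _
  rw [← Measure.map_map (hmean n) (hε2n n), S.map_ε2n_eq, Measure.map_map (hmean n) hε2]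

end LagoSetup

theorem lago_jacobian_convergence_general
    {Ω : Type} [MeasurableSpace Ω] {Pr : Measure Ω} [IsProbabilityMeasure Pr]
    {J1 J2 P Q : ℕ} (S : LagoSetup Ω Pr J1 J2 P Q)
    (βt : ℕ → Ω → EuclideanSpace ℝ (Fin (1 + P + Q)))
    (hβtcons : TendstoInMeasure Pr (fun n ω => βt n ω) atTop (fun _ => S.βstar)) :
    ∀ p q : Fin (1 + P + Q),
      TendstoInMeasure Pr
        (fun (n : ℕ) ω =>
          -((fderiv ℝ (fun b => S.U n b ω) (βt n ω)) (EuclideanSpace.single q 1) p))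
        atTop (fun _ => S.Jmat p q) := by
  intro p q
  have hstage1 := fun j => tendstoInMeasure_centerNegJacobianEntry S.h_smooth hβtcons
    (tendstoInMeasure_const_of_tendsto (tendsto_const_nhds (x := S.x1v j))) (S.α1_lim j)
    (S.tendstoInMeasure_stage1_errorMean j) p q
  have hstage2 := fun j => tendstoInMeasure_centerNegJacobianEntry S.h_smooth hβtcons
    (S.tendstoInMeasure_X2v j) (S.α2_lim j) (S.tendstoInMeasure_stage2_errorMean j) p q
  have hsum := (tendstoInMeasure_finset_sum_of_const Finset.univ fun j _ => hstage1 j).add_of_const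
    (tendstoInMeasure_finset_sum_of_const Finset.univ fun j _ => hstage2 j)
  exact hsum.congr_left fun n => ae_of_all _ fun ω => (S.neg_fderiv_U_apply n ω _ p q).symm

/-- **Convergence of the Jacobian of the estimating function:** for any B-valued random
vectors β̃_n → β* in probability, −D U_n(β̃_n) → J(β*) in probability, entrywise. -/
theorem lago_jacobian_convergence
    {Ω : Type} [MeasurableSpace Ω] {Pr : Measure Ω} [IsProbabilityMeasure Pr]
    {J1 J2 P Q : ℕ} (S : LagoSetup Ω Pr J1 J2 P Q)
    (βt : ℕ → Ω → EuclideanSpace ℝ (Fin (1 + P + Q)))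
    (hβtmeas : ∀ n, Measurable (βt n))
    (hβtmem : ∀ n ω, βt n ω ∈ S.B)
    (hβtcons : TendstoInMeasure Pr (fun n ω => βt n ω) atTop (fun _ => S.βstar)) :
    ∀ p q : Fin (1 + P + Q),
      TendstoInMeasure Pr
        (fun (n : ℕ) ω =>
          -((fderiv ℝ (fun b => S.U n b ω) (βt n ω)) (EuclideanSpace.single q 1) p))
        atTop (fun _ => S.Jmat p q) :=
  lago_jacobian_convergence_general S βt hβtcons
end
end
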